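/- arXiv:1402.1566 — 4 statements merged into one kernel-verified Lean document; each statement's English description precedes it below -/
import Mathlib

section
/- For every integer n ≥ 1: lim_{L→∞} Lⁿ · Σ_{m=1}^∞ (1/m²)·Γ(mL−n)/Γ(mL) = ζ(n+2), where L ranges over real numbers L > n (so that mL − n > 0 for all integers m ≥ 1) and ζ is the Riemann zeta function. -/
/-!
For `m L > n` the functional equation of `Γ` gives
`Lⁿ Γ(mL - n) / Γ(mL) = ∏_{k<n} L / (mL - n + k)`, which tends to `m⁻ⁿ` as `L → ∞` and is
bounded by `(2/m)ⁿ` once `L ≥ 2n`. Dominated convergence for series then turns the sum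
into `∑ m⁻² m⁻ⁿ = ζ(n + 2)`.
-/

open Filter Topology

namespace Real

theorem Gamma_add_nat_eq_mul_prod {x : ℝ} (hx : 0 < x) (n : ℕ) :
    Gamma (x + n) = Gamma x * ∏ k ∈ Finset.range n, (x + k) := by
  induction n with
  | zero => simp
  | succ n ih =>
    rw [Nat.cast_succ, ← add_assoc, Gamma_add_one (by positivity), ih, Finset.prod_range_succ]
    ring

theorem pow_mul_Gamma_sub_div_Gamma_eq_prod {c L : ℝ} {n : ℕ} (h : n < c * L) :
    L ^ n * (Gamma (c * L - n) / Gamma (c * L)) =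
      ∏ k ∈ Finset.range n, L / (c * L - n + k) := by
  have hx : 0 < c * L - n := by linarith
  have hΓ := Gamma_add_nat_eq_mul_prod hx n
  rw [sub_add_cancel] at hΓ
  rw [hΓ, Finset.prod_div_distrib, Finset.prod_const, Finset.card_range,
    div_mul_cancel_left₀ (Gamma_pos_of_pos hx).ne', div_eq_mul_inv]

theorem tendsto_div_mul_add_atTop {c : ℝ} (hc : 0 < c) (a : ℝ) :
    Tendsto (fun L => L / (c * L + a)) atTop (𝓝 c⁻¹) := by
  have h : Tendsto (fun L => c + a / L) atTop (𝓝 c) := by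
    simpa using tendsto_const_nhds.add
      (tendsto_const_nhds.div_atTop (tendsto_id (x := (atTop : Filter ℝ))))
  refine (h.inv₀ hc.ne').congr' ?_
  filter_upwards [eventually_gt_atTop 0] with L hL
  field_simp

theorem tendsto_pow_mul_Gamma_sub_div_Gamma {c : ℝ} (hc : 0 < c) (n : ℕ) :
    Tendsto (fun L => L ^ n * (Gamma (c * L - n) / Gamma (c * L))) atTop (𝓝 (c ^ n)⁻¹) := by
  have h := tendsto_finsetProd (Finset.range n) fun (k : ℕ) _ =>
    tendsto_div_mul_add_atTop hc (k - n)
  rw [Finset.prod_const, Finset.card_range, inv_pow] at h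
  refine h.congr' ?_
  filter_upwards [eventually_gt_atTop (n / c)] with L hL
  rw [pow_mul_Gamma_sub_div_Gamma_eq_prod ((div_lt_iff₀' hc).1 hL)]
  exact Finset.prod_congr rfl fun k _ => by ring_nf

theorem abs_pow_mul_Gamma_sub_div_Gamma_le {c L : ℝ} {n : ℕ} (hc : 0 < c) (hL : 0 < L)
    (h : 2 * n ≤ c * L) :
    |L ^ n * (Gamma (c * L - n) / Gamma (c * L))| ≤ (2 / c) ^ n := by
  have hn : n < c * L := by nlinarith [mul_pos hc hL]
  have hfac : ∀ k ∈ Finset.range n, 0 < c * L - n + k := fun k _ => by positivity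
  have hfac_nonneg : ∀ k ∈ Finset.range n, 0 ≤ L / (c * L - n + k) :=
    fun k hk => div_nonneg hL.le (hfac k hk).le
  rw [pow_mul_Gamma_sub_div_Gamma_eq_prod hn, abs_of_nonneg (Finset.prod_nonneg hfac_nonneg)]
  calc ∏ k ∈ Finset.range n, L / (c * L - n + k)
      ≤ ∏ _k ∈ Finset.range n, 2 / c := Finset.prod_le_prod hfac_nonneg fun k hk => by
        rw [div_le_div_iff₀ (hfac k hk) hc]
        nlinarith [(Nat.cast_nonneg k : (0 : ℝ) ≤ k)]
    _ = (2 / c) ^ n := by rw [Finset.prod_const, Finset.card_range]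

end Real

theorem riemannZeta_nat_eq_tsum_one_div_nat_add_one_pow {k : ℕ} (hk : 1 < k) :
    riemannZeta k = ((∑' m : ℕ, 1 / ((m : ℝ) + 1) ^ k : ℝ) : ℂ) := by
  rw [zeta_eq_tsum_one_div_nat_add_one_cpow (by simpa using hk), Complex.ofReal_tsum]
  simp [Complex.cpow_natCast]

theorem summable_one_div_nat_add_one_pow {k : ℕ} (hk : 1 < k) :
    Summable fun m : ℕ => 1 / ((m : ℝ) + 1) ^ k := by
  simpa using (summable_nat_add_iff 1).2 (Real.summable_one_div_nat_pow.2 hk)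

theorem stmt7_general (n : ℕ) :
    Tendsto
      (fun L : ℝ => ((L ^ n *
          ∑' m : ℕ, (1 / ((m : ℝ) + 1) ^ 2) *
            (Real.Gamma (((m : ℝ) + 1) * L - n) / Real.Gamma (((m : ℝ) + 1) * L)) : ℝ) : ℂ))
      atTop (nhds (riemannZeta ((n : ℂ) + 2))) := by
  rw [show (n : ℂ) + 2 = (n + 2 : ℕ) by push_cast; rfl,
    riemannZeta_nat_eq_tsum_one_div_nat_add_one_pow (by omega)]
  refine (Complex.continuous_ofReal.tendsto _).comp ?_
  simp_rw [← tsum_mul_left, mul_left_comm _ (1 / _ : ℝ)]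
  have hm : ∀ m : ℕ, 0 < (m : ℝ) + 1 := fun m => by positivity
  refine tendsto_tsum_of_dominated_convergence
    ((summable_one_div_nat_add_one_pow (k := n + 2) (by omega)).mul_left (2 ^ n))
    (fun m => ?_) ?_
  · convert (Real.tendsto_pow_mul_Gamma_sub_div_Gamma (hm m) n).const_mul (1 / ((m : ℝ) + 1) ^ 2)
      using 2
    field_simp
    ring
  · filter_upwards [eventually_ge_atTop (2 * n : ℝ), eventually_gt_atTop 0] with L hnL hL m
    have h2n : 2 * n ≤ ((m : ℝ) + 1) * L := by nlinarith [(Nat.cast_nonneg m : (0 : ℝ) ≤ m)]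
    rw [norm_mul, Real.norm_eq_abs, Real.norm_eq_abs, abs_of_pos (by positivity)]
    calc 1 / ((m : ℝ) + 1) ^ 2 * |L ^ n * _|
        ≤ 1 / ((m : ℝ) + 1) ^ 2 * (2 / ((m : ℝ) + 1)) ^ n := by
          gcongr
          exact Real.abs_pow_mul_Gamma_sub_div_Gamma_le (hm m) hL h2n
      _ = 2 ^ n * (1 / ((m : ℝ) + 1) ^ (n + 2)) := by
          rw [div_pow, pow_add]
          field_simp

theorem stmt7 (n : ℕ) (hn : 1 ≤ n) :
    Tendsto
      (fun L : ℝ => ((L ^ n *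
          ∑' m : ℕ, (1 / ((m : ℝ) + 1) ^ 2) *
            (Real.Gamma (((m : ℝ) + 1) * L - n) / Real.Gamma (((m : ℝ) + 1) * L)) : ℝ) : ℂ))
      atTop (nhds (riemannZeta ((n : ℂ) + 2))) :=
  stmt7_general n
end

section
/- Let n ≥ 1 be an integer and for L > 0 set ε_L = 2·L^{−(n+1)}. There exist C > 0 and L₀ such that for all real L ≥ L₀: Σ_{m=1}^∞ (1/m²)·∫_{{z ∈ ℂⁿ : (ε_L/2)^{1/L} ≤ 1−|z|² ≤ ε_L^{1/L}}} (1−|z|²)^{mL−n−1} dν(z) ≤ C·(log L)^{n−1}/L^{2n+1}. -/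
/-!
Write `ε = 2 L^(-(n+1))`, `a = (ε/2)^(1/L)`, `b = ε^(1/L)` and `S = {a ≤ 1 - |z|² ≤ b}`. On `S` the
`m`-th integrand is at most `b^((m+1)L - n - 1) ≤ ε^(m+1) a^(-(n+1)) ≤ 2 ε^(m+1)` for large `L`,
since `a = (L^(1/L))^(-(n+1)) → 1`; so the series is at most `4 ε ν(S)`. As `ν{|z|² ≤ t} = tⁿ`,
`ν(S) ≤ (1-a)ⁿ - (1-b)ⁿ ≤ n (1-a)ⁿ⁻¹ (b-a)`, where `1 - a ≤ (n+1) log L / L` and `b - a ≤ 2/L`.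
-/

open MeasureTheory

noncomputable section

/-- `|z|² = Σ |zⱼ|²`, the square of the Euclidean norm on ℂⁿ. -/
def enormSq {n : ℕ} (z : Fin n → ℂ) : ℝ := ∑ i, ‖z i‖ ^ 2

/-- Lebesgue measure on ℂⁿ normalised so that the unit ball has measure 1:
`ν = (n!/πⁿ) · (2n)-dimensional Lebesgue measure`. -/
def nuMeasure (n : ℕ) : Measure (Fin n → ℂ) :=
  ENNReal.ofReal (n.factorial / Real.pi ^ n) • volume

open Real Filter Topology

section Measure

variable {n : ℕ}

@[fun_prop]
lemma continuous_enormSq : Continuous (enormSq (n := n)) := by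
  unfold enormSq; fun_prop

lemma enormSq_nonneg (z : Fin n → ℂ) : 0 ≤ enormSq z := by
  unfold enormSq; positivity

lemma sum_norm_rpow_two_rpow_half (z : Fin n → ℂ) :
    (∑ i, ‖z i‖ ^ (2 : ℝ)) ^ (1 / (2 : ℝ)) = √(enormSq z) := by
  simp [enormSq, sqrt_eq_rpow]

/-- The hypothesis is the volume `πⁿ tⁿ / n!` of a Euclidean ball of radius `√t` in the form
`Complex.volume_sum_rpow_le` gives it. -/
lemma nuMeasure_eq_of_volume_eq {S : Set (Fin n → ℂ)} {t : ℝ} (ht : 0 ≤ t)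
    (hS : volume S = ENNReal.ofReal √t ^ (2 * Fintype.card (Fin n)) *
      ENNReal.ofReal ((π * Gamma (2 / 2 + 1)) ^ Fintype.card (Fin n) /
        Gamma (2 * Fintype.card (Fin n) / 2 + 1))) :
    nuMeasure n S = ENNReal.ofReal (t ^ n) := by
  have hGamma : Gamma (2 * (n : ℝ) / 2 + 1) = n.factorial := by
    rw [mul_div_cancel_left₀ _ two_ne_zero, Gamma_nat_eq_factorial]
  rw [nuMeasure, Measure.smul_apply, hS, Fintype.card_fin, hGamma, div_self two_ne_zero,
    one_add_one_eq_two, Gamma_two, mul_one, ← ENNReal.ofReal_pow (sqrt_nonneg t), pow_mul,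
    sq_sqrt ht, smul_eq_mul, mul_left_comm, ← ENNReal.ofReal_mul (by positivity),
    div_mul_div_cancel₀ (by positivity), div_self (by positivity), ENNReal.ofReal_one,
    mul_one]

variable [NeZero n]

lemma nuMeasure_setOf_enormSq_le {t : ℝ} (ht : 0 ≤ t) :
    nuMeasure n {z | enormSq z ≤ t} = ENNReal.ofReal (t ^ n) := by
  refine nuMeasure_eq_of_volume_eq ht ?_
  rw [← Complex.volume_sum_rpow_le (Fin n) one_le_two √t]
  congr 1
  ext z
  simp only [Set.mem_ofPred_eq, sum_norm_rpow_two_rpow_half, sqrt_le_sqrt_iff ht]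

lemma nuMeasure_setOf_enormSq_lt {t : ℝ} (ht : 0 ≤ t) :
    nuMeasure n {z | enormSq z < t} = ENNReal.ofReal (t ^ n) := by
  refine nuMeasure_eq_of_volume_eq ht ?_
  rw [← Complex.volume_sum_rpow_lt (Fin n) one_le_two √t]
  congr 1
  ext z
  simp only [Set.mem_ofPred_eq, sum_norm_rpow_two_rpow_half, sqrt_lt_sqrt_iff (enormSq_nonneg z)]

lemma nuMeasure_shell_le {s t : ℝ} (hs : 0 ≤ s) (hst : s ≤ t) :
    nuMeasure n {z | s ≤ enormSq z ∧ enormSq z ≤ t} ≤ ENNReal.ofReal (t ^ n - s ^ n) := by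
  have hsub : {z : Fin n → ℂ | s ≤ enormSq z ∧ enormSq z ≤ t} ⊆
      {z | enormSq z ≤ t} \ {z | enormSq z < s} :=
    fun z hz => ⟨hz.2, fun h => (not_lt.2 hz.1) h⟩
  have hinner : {z : Fin n → ℂ | enormSq z < s} ⊆ {z | enormSq z ≤ t} :=
    fun z hz => (le_of_lt hz).trans hst
  refine (measure_mono hsub).trans_eq ?_
  rw [measure_sdiff hinner (measurableSet_lt (by fun_prop) measurable_const).nullMeasurableSet
    (by simp [nuMeasure_setOf_enormSq_lt hs]), nuMeasure_setOf_enormSq_le (hs.trans hst),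
    nuMeasure_setOf_enormSq_lt hs, ENNReal.ofReal_sub _ (by positivity)]

end Measure

lemma tsum_one_div_sq_mul_le {c : ℕ → ℝ} {K ε : ℝ} (hε : 0 ≤ ε) (hε2 : ε ≤ 1 / 2)
    (hc0 : ∀ m, 0 ≤ c m) (hc : ∀ m, c m ≤ K * ε ^ (m + 1)) :
    ∑' m : ℕ, 1 / ((m : ℝ) + 1) ^ 2 * c m ≤ 2 * K * ε := by
  have hKε : 0 ≤ K * ε := by simpa using (hc0 0).trans (hc 0)
  have hε1 : ε < 1 := by linarith
  have hterm (m : ℕ) : 1 / ((m : ℝ) + 1) ^ 2 * c m ≤ K * ε * ε ^ m := by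
    have hw : 1 / ((m : ℝ) + 1) ^ 2 ≤ 1 :=
      div_le_one_of_le₀ (one_le_pow₀ (by simp)) (by positivity)
    calc 1 / ((m : ℝ) + 1) ^ 2 * c m ≤ c m := mul_le_of_le_one_left (hc0 m) hw
      _ ≤ K * ε * ε ^ m := by rw [mul_assoc, ← pow_succ']; exact hc m
  have hgeom : Summable fun m : ℕ => K * ε * ε ^ m :=
    (summable_geometric_of_lt_one hε hε1).mul_left _
  calc ∑' m : ℕ, 1 / ((m : ℝ) + 1) ^ 2 * c m ≤ ∑' m : ℕ, K * ε * ε ^ m :=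
        (hgeom.of_nonneg_of_le (fun m => mul_nonneg (by positivity) (hc0 m)) hterm).tsum_le_tsum
          hterm hgeom
    _ = K * ε * (1 - ε)⁻¹ := by rw [tsum_mul_left, tsum_geometric_of_lt_one hε hε1]
    _ ≤ K * ε * 2 := by
        gcongr
        rw [inv_le_comm₀ (by linarith) two_pos]
        linarith
    _ = 2 * K * ε := by ring

lemma rpow_mul_sub_le {a x ε L q c : ℝ} (ha : 0 < a) (hax : a ≤ x) (hxε : x ≤ ε ^ (1 / L))
    (hε : 0 ≤ ε) (hL : 0 < L) (hc : 0 ≤ c) (hqc : c ≤ q * L) :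
    x ^ (q * L - c) ≤ ε ^ q * a ^ (-c) := by
  have hx : 0 < x := ha.trans_le hax
  rw [rpow_sub hx, div_eq_mul_inv, ← rpow_neg hx.le]
  have hq : (ε ^ (1 / L)) ^ (q * L) = ε ^ q := by
    rw [← rpow_mul hε]; field_simp
  have hpos : x ^ (q * L) ≤ ε ^ q :=
    calc x ^ (q * L) ≤ (ε ^ (1 / L)) ^ (q * L) := by gcongr; linarith
      _ = ε ^ q := hq
  exact mul_le_mul hpos (rpow_le_rpow_of_nonpos ha hax (neg_nonpos.2 hc)) (by positivity)
    (by positivity)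

lemma tsum_shell_integral_le {n : ℕ} [NeZero n] {a ε L : ℝ} (ha : 0 < a) (hab : a ≤ ε ^ (1 / L))
    (hε : 0 < ε) (hε2 : ε ≤ 1 / 2) (hL : (n : ℝ) + 1 ≤ L) (ha2 : a ^ (-((n : ℝ) + 1)) ≤ 2) :
    ∑' m : ℕ, (1 / ((m : ℝ) + 1) ^ 2) *
        ∫ z in {z : Fin n → ℂ | a ≤ 1 - enormSq z ∧ 1 - enormSq z ≤ ε ^ (1 / L)},
          (1 - enormSq z) ^ (((m : ℝ) + 1) * L - n - 1) ∂(nuMeasure n)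
      ≤ 4 * ε * (n * (1 - a) ^ (n - 1) * (ε ^ (1 / L) - a)) := by
  set b := ε ^ (1 / L)
  set S := {z : Fin n → ℂ | a ≤ 1 - enormSq z ∧ 1 - enormSq z ≤ b}
  have hL0 : 0 < L := by linarith [(n.cast_nonneg : (0 : ℝ) ≤ n)]
  have hb1 : b ≤ 1 := rpow_le_one hε.le (by linarith) (by positivity)
  have hSmeas : MeasurableSet S :=
    (measurableSet_le (f := fun _ => a) (g := fun z => 1 - enormSq z) (by fun_prop)
      (by fun_prop)).inter (measurableSet_le (g := fun _ => b) (by fun_prop) (by fun_prop))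
  have hS : nuMeasure n S ≤ ENNReal.ofReal ((1 - a) ^ n - (1 - b) ^ n) :=
    (measure_mono (show S ⊆ {z | 1 - b ≤ enormSq z ∧ enormSq z ≤ 1 - a} from
      fun z hz => ⟨by linarith [hz.2], by linarith [hz.1]⟩)).trans
      (nuMeasure_shell_le (by linarith) (by linarith))
  have hSfin : nuMeasure n S < ⊤ := hS.trans_lt ENNReal.ofReal_lt_top
  have hshell : (nuMeasure n).real S ≤ n * (1 - a) ^ (n - 1) * (b - a) := by
    refine (ENNReal.toReal_le_of_le_ofReal ?_ hS).trans ?_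
    · linarith [pow_le_pow_left₀ (by linarith : 0 ≤ 1 - b) (by linarith : 1 - b ≤ 1 - a) n]
    · have h := abs_pow_sub_pow_le (1 - a) (1 - b) n
      rw [max_eq_left (by rw [abs_of_nonneg, abs_of_nonneg] <;> linarith),
        abs_of_nonneg (by linarith : 0 ≤ 1 - a), abs_of_nonneg (by linarith : 0 ≤ 1 - a - (1 - b))]
        at h
      linarith [le_abs_self ((1 - a) ^ n - (1 - b) ^ n)]
  have hintegrand (m : ℕ) (z) (hz : z ∈ S) :
      ‖(1 - enormSq z) ^ (((m : ℝ) + 1) * L - n - 1)‖ ≤ 2 * ε ^ (m + 1) := by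
    have hm : (n : ℝ) + 1 ≤ ((m : ℝ) + 1) * L := by
      nlinarith [(m.cast_nonneg : (0 : ℝ) ≤ m)]
    rw [norm_of_nonneg (rpow_nonneg (ha.le.trans hz.1) _), sub_sub,
      ← rpow_natCast, Nat.cast_succ, mul_comm 2]
    exact (rpow_mul_sub_le ha hz.1 hz.2 hε.le hL0 (by positivity) hm).trans
      (mul_le_mul_of_nonneg_left ha2 (by positivity))
  have hintegral (m : ℕ) :
      ∫ z in S, (1 - enormSq z) ^ (((m : ℝ) + 1) * L - n - 1) ∂(nuMeasure n)
        ≤ 2 * (nuMeasure n).real S * ε ^ (m + 1) := by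
    refine (le_abs_self _).trans ((norm_setIntegral_le_of_norm_le_const hSfin
      (hintegrand m)).trans_eq ?_)
    ring
  calc _ ≤ 2 * (2 * (nuMeasure n).real S) * ε :=
        tsum_one_div_sq_mul_le hε.le hε2
          (fun m => setIntegral_nonneg hSmeas fun z hz => rpow_nonneg (ha.le.trans hz.1) _)
          hintegral
    _ ≤ 4 * ε * (n * (1 - a) ^ (n - 1) * (b - a)) := by nlinarith

lemma one_sub_rpow_one_div_le {r : ℝ} (hr : 0 < r) (L : ℝ) : 1 - r ^ (1 / L) ≤ -log r / L := by
  rw [rpow_def_of_pos hr, mul_one_div, neg_div]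
  linarith [add_one_le_exp (log r / L)]

lemma two_mul_rpow_sub_rpow_le {r L : ℝ} (hr0 : 0 ≤ r) (hr1 : r ≤ 1) (hL : 1 ≤ L) :
    (2 * r) ^ (1 / L) - r ^ (1 / L) ≤ 2 / L := by
  have hL0 : 0 < L := by linarith
  have hlog2 : |log 2 / L| ≤ 1 / L := by
    rw [abs_of_nonneg (by positivity)]
    gcongr
    linarith [log_two_lt_d9]
  have h2 : 2 ^ (1 / L) - 1 ≤ 2 / L := by
    rw [rpow_def_of_pos two_pos, mul_one_div]
    refine (le_abs_self _).trans ((abs_exp_sub_one_le (hlog2.trans ?_)).trans ?_)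
    · rwa [div_le_one hL0]
    · linarith [show 2 * (1 / L) = 2 / L by ring]
  calc (2 * r) ^ (1 / L) - r ^ (1 / L) = (2 ^ (1 / L) - 1) * r ^ (1 / L) := by
        rw [mul_rpow two_pos.le hr0]; ring
    _ ≤ 2 ^ (1 / L) - 1 :=
        mul_le_of_le_one_right (sub_nonneg.2 (one_le_rpow one_le_two (by positivity)))
          (rpow_le_one hr0 hr1 (by positivity))
    _ ≤ 2 / L := h2

lemma tendsto_rpow_neg_rpow_one_div_atTop (c : ℝ) :
    Tendsto (fun L : ℝ => (L ^ (-c)) ^ (1 / L)) atTop (𝓝 1) := by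
  have h := tendsto_rpow_div.rpow_const (p := -c) (Or.inl one_ne_zero)
  rw [one_rpow] at h
  refine h.congr' ((eventually_ge_atTop 0).mono fun L hL => ?_)
  dsimp only
  rw [← rpow_mul hL, ← rpow_mul hL, mul_comm]

lemma eventually_shell_parameters {c : ℝ} (hc : 0 < c) :
    ∀ᶠ L : ℝ in atTop, c ≤ L ∧ 2 * L ^ (-c) ≤ 1 / 2 ∧ ((L ^ (-c)) ^ (1 / L)) ^ (-c) ≤ 2 := by
  have hε : Tendsto (fun L : ℝ => 2 * L ^ (-c)) atTop (𝓝 0) := by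
    simpa using (tendsto_rpow_neg_atTop hc).const_mul 2
  have ha : Tendsto (fun L : ℝ => ((L ^ (-c)) ^ (1 / L)) ^ (-c)) atTop (𝓝 1) := by
    simpa using (tendsto_rpow_neg_rpow_one_div_atTop c).rpow_const (Or.inl one_ne_zero)
  exact (eventually_ge_atTop c).and <|
    (hε.eventually (ge_mem_nhds (by norm_num))).and (ha.eventually (ge_mem_nhds one_lt_two))

lemma shell_series_bound_le {n : ℕ} (hn : 1 ≤ n) {L : ℝ} (hL : 1 ≤ L) :
    4 * (2 * L ^ (-((n : ℝ) + 1))) * (n * (1 - (L ^ (-((n : ℝ) + 1))) ^ (1 / L)) ^ (n - 1) *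
        ((2 * L ^ (-((n : ℝ) + 1))) ^ (1 / L) - (L ^ (-((n : ℝ) + 1))) ^ (1 / L)))
      ≤ 16 * n * ((n : ℝ) + 1) ^ (n - 1) * log L ^ (n - 1) / L ^ (2 * n + 1) := by
  set c : ℝ := (n : ℝ) + 1
  have hL0 : 0 < L := by linarith
  have hr : 0 < L ^ (-c) := rpow_pos_of_pos hL0 _
  have hr1 : L ^ (-c) ≤ 1 := rpow_le_one_of_one_le_of_nonpos hL (neg_nonpos.2 (by positivity))
  have h1a : 1 - (L ^ (-c)) ^ (1 / L) ≤ c * log L / L := by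
    simpa [log_rpow hL0] using one_sub_rpow_one_div_le hr L
  have ha1 : 0 ≤ 1 - (L ^ (-c)) ^ (1 / L) := by
    linarith [rpow_le_one hr.le hr1 (by positivity : 0 ≤ 1 / L)]
  have hab : 0 ≤ (2 * L ^ (-c)) ^ (1 / L) - (L ^ (-c)) ^ (1 / L) :=
    sub_nonneg.2 (rpow_le_rpow hr.le (by linarith) (by positivity))
  have hba := two_mul_rpow_sub_rpow_le hr.le hr1 hL
  calc _ ≤ 4 * (2 * L ^ (-c)) * (n * (c * log L / L) ^ (n - 1) * (2 / L)) := by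
        gcongr
        exact mul_nonneg n.cast_nonneg
          (pow_nonneg (div_nonneg (mul_nonneg (by positivity) (log_nonneg hL)) hL0.le) _)
    _ = _ := by
        rw [rpow_neg hL0.le, show c = ((n + 1 : ℕ) : ℝ) by push_cast; rfl, rpow_natCast,
          div_pow, mul_pow, show 2 * n + 1 = (n + 1) + (n - 1) + 1 by omega, pow_add, pow_add]
        field_simp
        ring

theorem stmt8 (n : ℕ) (hn : 1 ≤ n) :
    ∃ C > (0:ℝ), ∃ L₀ : ℝ, ∀ L : ℝ, L₀ ≤ L →
      (∑' m : ℕ, (1 / ((m : ℝ) + 1) ^ 2) *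
        ∫ z in {z : Fin n → ℂ |
            (L ^ (-((n : ℝ) + 1))) ^ (1 / L) ≤ 1 - enormSq z ∧
            1 - enormSq z ≤ (2 * L ^ (-((n : ℝ) + 1))) ^ (1 / L)},
          (1 - enormSq z) ^ (((m : ℝ) + 1) * L - n - 1) ∂(nuMeasure n))
        ≤ C * (Real.log L) ^ (n - 1) / L ^ (2 * n + 1) := by
  have : NeZero n := ⟨by omega⟩
  obtain ⟨L₀, hL₀⟩ := eventually_atTop.1 (eventually_shell_parameters (c := (n : ℝ) + 1)
    (by positivity))
  refine ⟨16 * n * ((n : ℝ) + 1) ^ (n - 1), by positivity, L₀, fun L hL => ?_⟩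
  obtain ⟨hLn, hε, ha⟩ := hL₀ L hL
  have hL1 : 1 ≤ L := by linarith [(n.cast_nonneg : (0 : ℝ) ≤ n)]
  have hr : 0 < L ^ (-((n : ℝ) + 1)) := rpow_pos_of_pos (by linarith) _
  have hab : (L ^ (-((n : ℝ) + 1))) ^ (1 / L) ≤ (2 * L ^ (-((n : ℝ) + 1))) ^ (1 / L) :=
    rpow_le_rpow hr.le (by linarith) (by positivity)
  exact (tsum_shell_integral_le (rpow_pos_of_pos hr _) hab (by positivity) hε hLn ha).trans
    (shell_series_bound_le hn hL1)
end
end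

section
/- Let n ≥ 2 be an integer and for L > 0 set r_L = 1 − L^{−(n+1)/L}. There exist C > 0 and L₀ such that for all real L ≥ L₀: Σ_{m=1}^∞ (1/m²)·Σ_{j=1}^{n−1} (Γ(mL−n)/(Γ(n−j)·Γ(mL−n+j)))·(1−r_L)^{mL−n+j−1}·r_L^{n−j} ≤ C·(log L)^{n−1}/L^{2n+1}. -/
/-!
Write `q = L^{-(n+1)/L} = 1 - r_L` and `x = mL - n ≥ L/2`. Since `Γ(x + j) ≥ x^j Γ(x)` and
`Γ(n - j) ≥ 1`, the Gamma quotient is at most `(2/L)^j`; moreover `r_L ≤ (n+1) log L / L`, and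
`q^{x+j-1} ≤ q^x = L^{n(n+1)/L} L^{-(n+1)m} ≤ 2 L^{-(n+1)m}`. Hence the `m`-th inner sum is
`O((log L)^{n-1} L^{-n} L^{-(n+1)m})`, a geometric series in `m` dominated by its term `m = 1`.
-/

open Filter Finset Real

namespace Real

lemma pow_mul_Gamma_le_Gamma_add_nat {x : ℝ} (hx : 0 < x) (j : ℕ) :
    x ^ j * Gamma x ≤ Gamma (x + j) := by
  induction j with
  | zero => simp
  | succ k ih =>
    have hxk : 0 < x + k := by positivity
    rw [Nat.cast_succ, ← add_assoc, Gamma_add_one hxk.ne', pow_succ', mul_assoc]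
    gcongr
    exact le_add_of_nonneg_right k.cast_nonneg

lemma one_le_Gamma_natCast {k : ℕ} (hk : k ≠ 0) : 1 ≤ Gamma k := by
  obtain ⟨l, rfl⟩ := Nat.exists_eq_succ_of_ne_zero hk
  rw [Nat.cast_succ, Gamma_nat_eq_factorial]
  exact_mod_cast l.factorial_pos

lemma Gamma_div_Gamma_mul_Gamma_add_le {x : ℝ} (hx : 0 < x) {n j : ℕ} (hjn : j < n) :
    Gamma x / (Gamma ((n : ℝ) - j) * Gamma (x + j)) ≤ (x ^ j)⁻¹ := by
  have hΓnj : 1 ≤ Gamma ((n : ℝ) - j) := by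
    rw [← Nat.cast_sub hjn.le]
    exact one_le_Gamma_natCast (by omega)
  have hΓxj : 0 < Gamma (x + j) := Gamma_pos_of_pos (by positivity)
  rw [div_le_iff₀ (by positivity), inv_mul_eq_div, le_div_iff₀ (by positivity), mul_comm]
  exact (pow_mul_Gamma_le_Gamma_add_nat hx j).trans (le_mul_of_one_le_left hΓxj.le hΓnj)

lemma one_sub_rpow_neg_div_le {L : ℝ} (hL : 0 < L) (a : ℝ) : 1 - L ^ (-a / L) ≤ a * log L / L := by
  rw [rpow_def_of_pos hL]
  linarith [add_one_le_exp (log L * (-a / L)), show log L * (-a / L) = -(a * log L / L) by ring]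

lemma rpow_neg_div_le_one {L a : ℝ} (hL : 1 ≤ L) (ha : 0 ≤ a) : L ^ (-a / L) ≤ 1 :=
  rpow_le_one_of_one_le_of_nonpos hL (div_nonpos_of_nonpos_of_nonneg (neg_nonpos.2 ha) (by linarith))

lemma rpow_neg_div_rpow_mul_sub {L : ℝ} (hL : 0 < L) (a t c : ℝ) :
    (L ^ (-a / L)) ^ (t * L - c) = L ^ (a * c / L) * L ^ (-(a * t)) := by
  rw [← rpow_mul hL.le, ← rpow_add hL]
  congr 1
  field_simp
  ring

lemma eventually_rpow_div_le_two (a : ℝ) : ∀ᶠ L in atTop, L ^ (a / L) ≤ 2 := by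
  have h := tendsto_rpow_div_mul_add a 1 0 zero_ne_one
  simp only [one_mul, add_zero] at h
  exact h.eventually (ge_mem_nhds one_lt_two)

end Real

lemma tsum_le_two_mul_of_le_geometric {f : ℕ → ℝ} {K ρ : ℝ} (hf0 : ∀ m, 0 ≤ f m)
    (hf : ∀ m, f m ≤ K * ρ ^ (m + 1)) (hρ0 : 0 ≤ ρ) (hρ : ρ ≤ 1 / 2) :
    ∑' m, f m ≤ 2 * (K * ρ) := by
  have hg : HasSum (fun m ↦ K * ρ * ρ ^ m) (K * ρ * (1 - ρ)⁻¹) :=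
    (hasSum_geometric_of_lt_one hρ0 (by linarith)).mul_left _
  have hf' : ∀ m, f m ≤ K * ρ * ρ ^ m := fun m ↦ by rw [mul_assoc, ← pow_succ']; exact hf m
  have hKρ : 0 ≤ K * ρ := by simpa using (hf0 0).trans (hf 0)
  calc ∑' m, f m ≤ K * ρ * (1 - ρ)⁻¹ :=
        hasSum_le hf' (Summable.of_nonneg_of_le hf0 hf' hg.summable).hasSum hg
    _ ≤ K * ρ * 2 := by
        gcongr
        rw [inv_le_comm₀ (by linarith) two_pos]
        linarith
    _ = 2 * (K * ρ) := mul_comm _ _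

noncomputable def gammaTerm (n j : ℕ) (x r : ℝ) : ℝ :=
  Gamma x / (Gamma ((n : ℝ) - j) * Gamma (x + j)) * (1 - r) ^ (x + j - 1) * r ^ (n - j)

section gammaTerm

variable {n j : ℕ} {x r : ℝ}

lemma gammaTerm_nonneg (hx : 0 ≤ x) (hr0 : 0 ≤ r) (hr1 : r ≤ 1) (hjn : j ≤ n) :
    0 ≤ gammaTerm n j x r := by
  have hnj : (0 : ℝ) ≤ n - j := by rw [← Nat.cast_sub hjn]; positivity
  have h1r : 0 ≤ 1 - r := by linarith
  have := Gamma_nonneg_of_nonneg hnj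
  have := Gamma_nonneg_of_nonneg hx
  unfold gammaTerm
  positivity

lemma gammaTerm_le (hx : 0 < x) (hr0 : 0 ≤ r) (hr1 : r ≤ 1) (hj : 1 ≤ j) (hjn : j < n) :
    gammaTerm n j x r ≤ (x ^ j)⁻¹ * (1 - r) ^ x * r ^ (n - j) := by
  have hj' : (1 : ℝ) ≤ j := by exact_mod_cast hj
  unfold gammaTerm
  gcongr ?_ * ?_ * _
  · exact Gamma_div_Gamma_mul_Gamma_add_le hx hjn
  · exact rpow_le_rpow_of_exponent_ge' (by linarith) (by linarith) hx.le (by linarith)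

end gammaTerm

section LargeL

variable {n : ℕ} {L : ℝ}

lemma half_le_mul_sub_of_large (hL : 0 ≤ L) (hLn : 2 * n ≤ L) (m : ℕ) :
    L / 2 ≤ ((m : ℝ) + 1) * L - n := by
  nlinarith [m.cast_nonneg (α := ℝ)]

lemma gammaTerm_le_of_large (he : exp 1 ≤ L) (hLn : 2 * n ≤ L)
    (hpow : L ^ (((n : ℝ) + 1) * n / L) ≤ 2) (m : ℕ) {j : ℕ} (hj : 1 ≤ j) (hjn : j ≤ n - 1) :
    gammaTerm n j (((m : ℝ) + 1) * L - n) (1 - L ^ (-((n : ℝ) + 1) / L)) ≤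
      2 * (2 * ((n + 1) * log L)) ^ (n - 1) / L ^ n * ((L ^ (n + 1))⁻¹) ^ (m + 1) := by
  have hL0 : 0 < L := (exp_pos 1).trans_le he
  have hlog : 1 ≤ log L := (le_log_iff_exp_le hL0).2 he
  set q := L ^ (-((n : ℝ) + 1) / L)
  set x := ((m : ℝ) + 1) * L - n
  set ρ := (L ^ (n + 1))⁻¹
  have hx : L / 2 ≤ x := half_le_mul_sub_of_large hL0.le hLn m
  have hq0 : 0 < q := by positivity
  have hq1 : q ≤ 1 := rpow_neg_div_le_one (by linarith [add_one_le_exp 1]) (by positivity)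
  have hr : 1 - q ≤ (n + 1) * log L / L := one_sub_rpow_neg_div_le hL0 _
  have hxj : (x ^ j)⁻¹ ≤ (2 / L) ^ j := by
    rw [← inv_div, inv_pow]
    gcongr
  have hqx : q ^ x ≤ 2 * ρ ^ (m + 1) := by
    have hρ : L ^ (-(((n : ℝ) + 1) * ((m : ℝ) + 1))) = ρ ^ (m + 1) := by
      rw [rpow_neg hL0.le, show ((n : ℝ) + 1) * ((m : ℝ) + 1) = (((n + 1) * (m + 1) : ℕ) : ℝ) by
        push_cast; ring, rpow_natCast, pow_mul, inv_pow]
    rw [rpow_neg_div_rpow_mul_sub hL0, hρ]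
    exact mul_le_mul_of_nonneg_right hpow (by positivity)
  have ha : 1 ≤ ((n : ℝ) + 1) * log L := by nlinarith [n.cast_nonneg (α := ℝ)]
  have hpow_j : (2 : ℝ) ^ j * ((n + 1) * log L) ^ (n - j) ≤ (2 * ((n + 1) * log L)) ^ (n - 1) := by
    rw [mul_pow (2 : ℝ)]
    exact mul_le_mul (pow_le_pow_right₀ one_le_two (by omega)) (pow_le_pow_right₀ ha (by omega))
      (by positivity) (by positivity)
  calc gammaTerm n j x (1 - q)
      ≤ (x ^ j)⁻¹ * q ^ x * (1 - q) ^ (n - j) := by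
        simpa only [sub_sub_cancel] using
          gammaTerm_le (n := n) (x := x) (r := 1 - q) (by linarith) (by linarith) (by linarith) hj
            (by omega)
    _ ≤ (2 / L) ^ j * (2 * ρ ^ (m + 1)) * ((n + 1) * log L / L) ^ (n - j) := by
        gcongr
    _ = 2 * ((2 : ℝ) ^ j * ((n + 1) * log L) ^ (n - j)) / L ^ n * ρ ^ (m + 1) := by
        rw [div_pow, div_pow, ← pow_mul_pow_sub L (show j ≤ n by omega)]
        ring
    _ ≤ 2 * (2 * ((n + 1) * log L)) ^ (n - 1) / L ^ n * ρ ^ (m + 1) := by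
        gcongr

lemma sum_gammaTerm_le_of_large (he : exp 1 ≤ L) (hLn : 2 * n ≤ L)
    (hpow : L ^ (((n : ℝ) + 1) * n / L) ≤ 2) (m : ℕ) :
    ∑ j ∈ Icc 1 (n - 1),
        gammaTerm n j (((m : ℝ) + 1) * L - n) (1 - L ^ (-((n : ℝ) + 1) / L)) ≤
      (n - 1 : ℕ) * (2 * (2 * ((n + 1) * log L)) ^ (n - 1) / L ^ n) * ((L ^ (n + 1))⁻¹) ^ (m + 1) := by
  calc _ ≤ (Icc 1 (n - 1)).card •
        (2 * (2 * ((n + 1) * log L)) ^ (n - 1) / L ^ n * ((L ^ (n + 1))⁻¹) ^ (m + 1)) :=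
        sum_le_card_nsmul _ _ _ fun j hj ↦
          gammaTerm_le_of_large he hLn hpow m (mem_Icc.1 hj).1 (mem_Icc.1 hj).2
    _ = _ := by rw [Nat.card_Icc, Nat.add_sub_cancel, nsmul_eq_mul, mul_assoc]

lemma tsum_gammaTerm_le_of_large (he : exp 1 ≤ L) (hLn : 2 * n ≤ L)
    (hpow : L ^ (((n : ℝ) + 1) * n / L) ≤ 2) :
    ∑' m : ℕ, 1 / ((m : ℝ) + 1) ^ 2 * ∑ j ∈ Icc 1 (n - 1),
        gammaTerm n j (((m : ℝ) + 1) * L - n) (1 - L ^ (-((n : ℝ) + 1) / L)) ≤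
      4 * (n - 1 : ℕ) * (2 * ((n : ℝ) + 1)) ^ (n - 1) * log L ^ (n - 1) / L ^ (2 * n + 1) := by
  have hL0 : 0 < L := (exp_pos 1).trans_le he
  have hL2 : 2 ≤ L := by linarith [add_one_le_exp 1]
  have hρ : (L ^ (n + 1))⁻¹ ≤ 1 / 2 := by
    rw [one_div]
    exact inv_anti₀ two_pos (hL2.trans (le_self_pow₀ (by linarith) n.succ_ne_zero))
  have hsum_nonneg (m : ℕ) : 0 ≤ ∑ j ∈ Icc 1 (n - 1),
      gammaTerm n j (((m : ℝ) + 1) * L - n) (1 - L ^ (-((n : ℝ) + 1) / L)) := by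
    have hq0 : 0 < L ^ (-((n : ℝ) + 1) / L) := by positivity
    have hq1 : L ^ (-((n : ℝ) + 1) / L) ≤ 1 := rpow_neg_div_le_one (by linarith) (by positivity)
    refine sum_nonneg fun j hj ↦ gammaTerm_nonneg ?_ (by linarith) (by linarith) ?_
    · linarith [half_le_mul_sub_of_large hL0.le hLn m]
    · have := (mem_Icc.1 hj).2
      omega
  have hweight (m : ℕ) : 1 / ((m : ℝ) + 1) ^ 2 ≤ 1 := by
    rw [div_le_one (by positivity)]
    nlinarith [m.cast_nonneg (α := ℝ)]
  calc _ ≤ 2 * ((n - 1 : ℕ) * (2 * (2 * ((n + 1) * log L)) ^ (n - 1) / L ^ n) * (L ^ (n + 1))⁻¹) :=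
        tsum_le_two_mul_of_le_geometric (fun m ↦ mul_nonneg (by positivity) (hsum_nonneg m))
          (fun m ↦ (mul_le_of_le_one_left (hsum_nonneg m) (hweight m)).trans
            (sum_gammaTerm_le_of_large he hLn hpow m)) (by positivity) hρ
    _ = _ := by
        rw [show 2 * n + 1 = n + (n + 1) by ring, pow_add L n (n + 1),
          show (2 : ℝ) * ((n + 1) * log L) = 2 * (n + 1) * log L by ring, mul_pow _ (log L)]
        field_simp
        ring

end LargeL

theorem stmt9 (n : ℕ) (hn : 2 ≤ n) :
    ∃ C > (0:ℝ), ∃ L₀ : ℝ, ∀ L : ℝ, L₀ ≤ L →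
      (∑' m : ℕ, (1 / ((m : ℝ) + 1) ^ 2) *
        ∑ j ∈ Finset.Icc 1 (n - 1),
          (Real.Gamma (((m : ℝ) + 1) * L - n) /
              (Real.Gamma ((n : ℝ) - j) * Real.Gamma (((m : ℝ) + 1) * L - n + j)))
            * (1 - (1 - L ^ (-((n : ℝ) + 1) / L))) ^ (((m : ℝ) + 1) * L - n + j - 1)
            * (1 - L ^ (-((n : ℝ) + 1) / L)) ^ (n - j))
        ≤ C * (Real.log L) ^ (n - 1) / L ^ (2 * n + 1) := by
  have hn1 : (0 : ℝ) < (n - 1 : ℕ) := by exact_mod_cast (show 0 < n - 1 by omega)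
  refine ⟨4 * (n - 1 : ℕ) * (2 * ((n : ℝ) + 1)) ^ (n - 1), by positivity, eventually_atTop.1 ?_⟩
  filter_upwards [eventually_ge_atTop (exp 1), eventually_ge_atTop (2 * (n : ℝ)),
    eventually_rpow_div_le_two (((n : ℝ) + 1) * n)] with L he hLn hpow
  exact tsum_gammaTerm_le_of_large he hLn hpow
end

section
/- For every integer n ≥ 1 and all reals ε > 0 and δ > 0, there exist C > 0 and L₀ such that for every real L ≥ L₀ and every integer m with m > C·δ·L: m^{n+L/2} ≤ C·e^{ε·m}·Γ(L)^{1/2}. -/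
/-!
Write `j + 1 ≤ L < j + 2` with `j` a natural number, so that
`m ^ (n + L / 2) ≤ m ^ (n + 1) * √(m ^ j)`. The factor `m ^ (n + 1)` is absorbed by
`C * exp (ε m / 2)`. Since `m > C δ L ≥ 2 j / ε²`, comparing `exp (ε m)` with its Taylor term of
degree `2 j` and using `(2 j)! ≤ (2 j) ^ j * j !` gives `m ^ j ≤ exp (ε m) * j ! ≤ exp (ε m) * Γ(L)`.
-/

open Real Nat

theorem Real.pow_le_factorial_div_pow_mul_exp {a x : ℝ} (ha : 0 < a) (hx : 0 ≤ x) (k : ℕ) :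
    x ^ k ≤ k ! / a ^ k * exp (a * x) := by
  have h := pow_div_factorial_le_exp _ (mul_nonneg ha.le hx) k
  rw [div_le_iff₀ (by positivity), mul_pow] at h
  rw [div_mul_eq_mul_div, le_div_iff₀ (by positivity)]
  linarith

theorem Real.pow_le_exp_mul_factorial {ε x : ℝ} (hε : 0 < ε) (j : ℕ) (hx : 2 / ε ^ 2 * j ≤ x) :
    x ^ j ≤ exp (ε * x) * j ! := by
  have hx0 : 0 ≤ x := le_trans (by positivity) hx
  have hj : (2 * j : ℝ) ≤ ε ^ 2 * x := by
    rwa [div_mul_eq_mul_div, div_le_iff₀ (by positivity), mul_comm x] at hx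
  have hfac : ((2 * j)! : ℝ) ≤ (2 * j) ^ j * j ! := by
    exact_mod_cast Nat.factorial_two_mul_le j
  have hexp := pow_div_factorial_le_exp _ (mul_nonneg hε.le hx0) (2 * j)
  rw [div_le_iff₀ (by positivity)] at hexp
  have key : x ^ j * (2 * j)! ≤ (ε * x) ^ (2 * j) * j ! :=
    calc x ^ j * (2 * j)! ≤ x ^ j * ((ε ^ 2 * x) ^ j * j !) := by
          gcongr
          exact hfac.trans (by gcongr)
      _ = (ε * x) ^ (2 * j) * j ! := by ring
  have := key.trans (mul_le_mul_of_nonneg_right hexp (by positivity))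
  rw [mul_assoc, mul_comm ((2 * j)! : ℝ), ← mul_assoc] at this
  exact le_of_mul_le_mul_right this (by positivity)

theorem Real.factorial_le_Gamma {j : ℕ} {L : ℝ} (hj : 1 ≤ j) (hL : (j : ℝ) + 1 ≤ L) :
    (j ! : ℝ) ≤ Gamma L := by
  rw [← Gamma_nat_eq_factorial]
  have h2 : (2 : ℝ) ≤ j + 1 := by
    have : (1 : ℝ) ≤ j := by exact_mod_cast hj
    linarith
  exact Gamma_strictMonoOn_Ici.monotoneOn h2 (h2.trans hL) hL

theorem Real.rpow_natCast_add_natCast_div_two {x : ℝ} (hx : 0 < x) (a b : ℕ) :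
    x ^ ((a : ℝ) + b / 2) = x ^ a * (x ^ b) ^ ((1 : ℝ) / 2) := by
  rw [rpow_add hx, rpow_natCast, ← rpow_natCast x b, ← rpow_mul hx.le]
  ring_nf

theorem exists_nat_add_one_le_lt_add_two {L : ℝ} (hL : 2 ≤ L) :
    ∃ j : ℕ, 1 ≤ j ∧ (j : ℝ) + 1 ≤ L ∧ L < j + 2 := by
  have h2 : 2 ≤ ⌊L⌋₊ := Nat.le_floor (by exact_mod_cast hL)
  refine ⟨⌊L⌋₊ - 1, by omega, ?_, ?_⟩ <;> rw [Nat.cast_sub (by omega)] <;> push_cast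
  · linarith [Nat.floor_le (by linarith : (0:ℝ) ≤ L)]
  · linarith [Nat.lt_floor_add_one L]

theorem stmt10_general (n : ℕ) (ε δ : ℝ) (hε : 0 < ε) (hδ : 0 < δ) :
    ∃ C > (0:ℝ), ∃ L₀ : ℝ, ∀ L : ℝ, L₀ ≤ L → ∀ m : ℕ, C * δ * L < m →
      (m : ℝ) ^ ((n : ℝ) + L / 2) ≤ C * Real.exp (ε * m) * Real.Gamma L ^ ((1 : ℝ) / 2) := by
  set C := max (2 / ε ^ 2 / δ) ((n + 1)! / (ε / 2) ^ (n + 1))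
  have hCδ : 2 / ε ^ 2 ≤ C * δ := (div_le_iff₀ hδ).mp (le_max_left _ _)
  refine ⟨C, lt_max_of_lt_right (by positivity), 2, fun L hL m hm => ?_⟩
  obtain ⟨j, hj1, hjL, hLj⟩ := exists_nat_add_one_le_lt_add_two hL
  have hCδL : 2 / ε ^ 2 * j ≤ C * δ * L :=
    mul_le_mul hCδ (by linarith) (Nat.cast_nonneg j)
      ((by positivity : (0:ℝ) ≤ 2 / ε ^ 2).trans hCδ)
  have hmj : 2 / ε ^ 2 * j ≤ m := hCδL.trans hm.le
  have hm1 : (1 : ℝ) ≤ m :=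
    Nat.one_le_cast.mpr (Nat.cast_pos.mp (lt_of_lt_of_le (by positivity) hmj))
  have hpoly : (m : ℝ) ^ (n + 1) ≤ C * exp (ε / 2 * m) :=
    (pow_le_factorial_div_pow_mul_exp (a := ε / 2) (by positivity) (by positivity) _).trans
      (by gcongr; exact le_max_right _ _)
  have hfac : (m : ℝ) ^ j ≤ exp (ε * m) * Gamma L :=
    (pow_le_exp_mul_factorial hε j hmj).trans (by gcongr; exact factorial_le_Gamma hj1 hjL)
  calc (m : ℝ) ^ ((n : ℝ) + L / 2) ≤ (m : ℝ) ^ (((n + 1 : ℕ) : ℝ) + (j : ℕ) / 2) :=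
        rpow_le_rpow_of_exponent_le hm1 (by push_cast; linarith)
    _ = (m : ℝ) ^ (n + 1) * ((m : ℝ) ^ j) ^ ((1 : ℝ) / 2) :=
        rpow_natCast_add_natCast_div_two (by linarith) _ _
    _ ≤ C * exp (ε / 2 * m) * (exp (ε * m) * Gamma L) ^ ((1 : ℝ) / 2) := by gcongr
    _ = C * exp (ε * m) * Gamma L ^ ((1 : ℝ) / 2) := by
        rw [mul_rpow (exp_pos _).le (Gamma_pos_of_pos (by linarith)).le, ← exp_mul,
          ← mul_assoc, mul_assoc C, ← exp_add]
        ring_nf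

theorem stmt10 (n : ℕ) (hn : 1 ≤ n) (ε δ : ℝ) (hε : 0 < ε) (hδ : 0 < δ) :
    ∃ C > (0:ℝ), ∃ L₀ : ℝ, ∀ L : ℝ, L₀ ≤ L → ∀ m : ℕ, C * δ * L < m →
      (m : ℝ) ^ ((n : ℝ) + L / 2) ≤ C * Real.exp (ε * m) * Real.Gamma L ^ ((1 : ℝ) / 2) :=
  stmt10_general n ε δ hε hδ
end
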